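/- If an n×n integer matrix C is upper triangular modulo a permutation (i.e., C = P·U·Pᵀ for a permutation matrix P and a matrix U that is upper triangular with diagonal entries d₁,...,dₙ), then det C = d₁···dₙ. In particular, the Cartan matrix of a gentle algebra whose only relations lie in t disjoint radical-square-zero oriented 3-cycles, each 3-cycle contributing a 3×3 diagonal block of determinant 2, has determinant 2^t. -/
import Mathlib

/-- If C = P·U·Pᵀ for a permutation matrix P (given here as a simultaneous
permutation of rows and columns via σ) and an upper triangular U, then
det C is the product of the diagonal entries of U. In particular a block
diagonal matrix with t blocks of size 3 each of determinant 2 has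
determinant 2^t. -/
theorem stmt_8 :
    (∀ (n : ℕ) (C U : Matrix (Fin n) (Fin n) ℤ) (σ : Equiv.Perm (Fin n)),
      U.BlockTriangular (id : Fin n → Fin n) →
      C = U.submatrix σ σ →
      C.det = ∏ i, U i i) ∧
    (∀ (t : ℕ) (D : Fin t → Matrix (Fin 3) (Fin 3) ℤ),
      (∀ k, (D k).det = 2) →
      (Matrix.blockDiagonal D).det = 2 ^ t) := by
  constructor
  · intro n C U σ hU hC
    rw [hC, Matrix.det_submatrix_equiv_self, Matrix.det_of_upperTriangular hU]
  · intro t D hD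
    rw [Matrix.det_blockDiagonal]
    simp [hD]
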